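/- arXiv:1809.07790 — 4 statements merged into one kernel-verified Lean document; each statement's English description precedes it below -/
import Mathlib

section
/- For every c ∈ ℝ, the integral identity ∫₀^∞ r⁴ e^{r²+c}/(e^{r²+c}+1)² dr = (3/2) ∫₀^∞ r²/(e^{r²+c}+1) dr holds. -/
/-!
Both integrands are dominated by a multiple of `r ^ n * exp (-r ^ 2)`, so everything converges,
and the identity is integration by parts: the function `r ^ 3 / 2 / (exp (r ^ 2 + c) + 1)` vanishes
at `0` and at infinity, and its derivative is the difference of the two sides.
-/

open Real MeasureTheory Set Filter Topology

lemma integrableOn_Ioi_pow_mul_exp_neg_sq (n : ℕ) :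
    IntegrableOn (fun x : ℝ => x ^ n * exp (-x ^ 2)) (Ioi 0) := by
  simpa using integrableOn_rpow_mul_exp_neg_mul_sq one_pos (s := n)
    (by linarith [n.cast_nonneg (α := ℝ)])

lemma tendsto_pow_mul_exp_neg_sq_atTop (n : ℕ) :
    Tendsto (fun x : ℝ => x ^ n * exp (-x ^ 2)) atTop (𝓝 0) := by
  have h := (rpow_mul_exp_neg_mul_sq_isLittleO_exp_neg one_pos n).trans_tendsto
    (tendsto_exp_atBot.comp (tendsto_id.const_mul_atTop_of_neg (by norm_num : -(1 / 2 : ℝ) < 0)))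
  simpa using h

lemma integrableOn_Ioi_of_abs_le_pow_mul_exp_neg_sq {f : ℝ → ℝ} (hf : Continuous f) (n : ℕ)
    (C : ℝ) (h : ∀ x, |f x| ≤ C * (x ^ n * exp (-x ^ 2))) : IntegrableOn f (Ioi 0) :=
  ((integrableOn_Ioi_pow_mul_exp_neg_sq n).const_mul C).mono' hf.aestronglyMeasurable
    (ae_of_all _ h)

lemma inv_exp_add_one_le_exp_neg (t : ℝ) : (exp t + 1)⁻¹ ≤ exp (-t) := by
  rw [exp_neg]
  exact inv_anti₀ (exp_pos t) (by linarith)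

lemma exp_div_exp_add_one_sq_le_exp_neg (t : ℝ) : exp t / (exp t + 1) ^ 2 ≤ exp (-t) := by
  rw [exp_neg, div_le_iff₀ (by positivity), inv_mul_eq_div, le_div_iff₀ (exp_pos t)]
  nlinarith [exp_pos t]

section

variable (c : ℝ)

lemma integrableOn_Ioi_sq_div_exp_add_one :
    IntegrableOn (fun r : ℝ => r ^ 2 / (exp (r ^ 2 + c) + 1)) (Ioi 0) := by
  refine integrableOn_Ioi_of_abs_le_pow_mul_exp_neg_sq (by fun_prop (disch := intro; positivity)) 2
    (exp (-c)) fun r => ?_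
  rw [abs_of_nonneg (by positivity), div_eq_mul_inv]
  calc r ^ 2 * (exp (r ^ 2 + c) + 1)⁻¹ ≤ r ^ 2 * exp (-(r ^ 2 + c)) := by
        gcongr; exact inv_exp_add_one_le_exp_neg _
    _ = exp (-c) * (r ^ 2 * exp (-r ^ 2)) := by rw [neg_add, exp_add]; ring

lemma integrableOn_Ioi_pow_four_mul_exp_div_exp_add_one_sq :
    IntegrableOn (fun r : ℝ => r ^ 4 * exp (r ^ 2 + c) / (exp (r ^ 2 + c) + 1) ^ 2) (Ioi 0) := by
  refine integrableOn_Ioi_of_abs_le_pow_mul_exp_neg_sq (by fun_prop (disch := intro; positivity)) 4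
    (exp (-c)) fun r => ?_
  rw [abs_of_nonneg (by positivity), mul_div_assoc]
  calc r ^ 4 * (exp (r ^ 2 + c) / (exp (r ^ 2 + c) + 1) ^ 2) ≤ r ^ 4 * exp (-(r ^ 2 + c)) := by
        gcongr; exact exp_div_exp_add_one_sq_le_exp_neg _
    _ = exp (-c) * (r ^ 4 * exp (-r ^ 2)) := by rw [neg_add, exp_add]; ring

lemma hasDerivAt_pow_three_div_two_div_exp_add_one (r : ℝ) :
    HasDerivAt (fun r : ℝ => r ^ 3 / 2 / (exp (r ^ 2 + c) + 1))
      (3 / 2 * (r ^ 2 / (exp (r ^ 2 + c) + 1))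
        - r ^ 4 * exp (r ^ 2 + c) / (exp (r ^ 2 + c) + 1) ^ 2) r := by
  have hden : HasDerivAt (fun r : ℝ => exp (r ^ 2 + c) + 1) (exp (r ^ 2 + c) * (2 * r)) r := by
    simpa using (((hasDerivAt_pow 2 r).add_const c).exp).add_const 1
  refine (((hasDerivAt_pow 3 r).div_const 2).div hden (by positivity)).congr_deriv ?_
  field_simp
  ring

lemma tendsto_pow_three_div_two_div_exp_add_one_atTop :
    Tendsto (fun r : ℝ => r ^ 3 / 2 / (exp (r ^ 2 + c) + 1)) atTop (𝓝 0) := by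
  have hbound := (tendsto_pow_mul_exp_neg_sq_atTop 3).const_mul (exp (-c) / 2)
  rw [mul_zero] at hbound
  refine squeeze_zero' ?_ ?_ hbound
  · filter_upwards [eventually_ge_atTop 0] with r hr
    positivity
  · filter_upwards [eventually_ge_atTop 0] with r hr
    rw [div_eq_mul_inv]
    calc r ^ 3 / 2 * (exp (r ^ 2 + c) + 1)⁻¹ ≤ r ^ 3 / 2 * exp (-(r ^ 2 + c)) := by
          gcongr; exact inv_exp_add_one_le_exp_neg _
      _ = exp (-c) / 2 * (r ^ 3 * exp (-r ^ 2)) := by rw [neg_add, exp_add]; ring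

end

theorem stmt_0 (c : ℝ) :
    ∫ r in Set.Ioi (0:ℝ), r ^ 4 * exp (r ^ 2 + c) / (exp (r ^ 2 + c) + 1) ^ 2 =
      (3 / 2) * ∫ r in Set.Ioi (0:ℝ), r ^ 2 / (exp (r ^ 2 + c) + 1) := by
  have hint₂ := integrableOn_Ioi_sq_div_exp_add_one c
  have hint₄ := integrableOn_Ioi_pow_four_mul_exp_div_exp_add_one_sq c
  have hparts := integral_Ioi_of_hasDerivAt_of_tendsto'
    (fun r _ => hasDerivAt_pow_three_div_two_div_exp_add_one c r)
    ((hint₂.const_mul _).sub hint₄) (tendsto_pow_three_div_two_div_exp_add_one_atTop c)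
  rw [integral_sub (hint₂.const_mul _) hint₄, integral_const_mul] at hparts
  simp only [ne_eq, OfNat.ofNat_ne_zero, not_false_eq_true, zero_pow, zero_div, zero_add,
    sub_self] at hparts
  linarith
end

section
/- Define β(c) = (∫_{ℝ³} 1/(e^{|p|²+c}+1) dp) / (∫_{ℝ³} |p|²/(e^{|p|²+c}+1) dp)^{3/5} for c ∈ ℝ. Then β is strictly decreasing on [−ln 3, ∞). -/
open Real MeasureTheory

noncomputable def betaFn (c : ℝ) : ℝ :=
    (∫ p : EuclideanSpace ℝ (Fin 3), 1 / (exp (‖p‖ ^ 2 + c) + 1)) /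
      (∫ p : EuclideanSpace ℝ (Fin 3), ‖p‖ ^ 2 / (exp (‖p‖ ^ 2 + c) + 1)) ^ ((3:ℝ) / 5)

/-!
In polar coordinates `β = κ F₂ / (κ F₄) ^ (3/5)` with `κ = 4π`, `F_k(c) = ∫₀^∞ r^k f(r² + c) dr` and
`f(x) = 1 / (eˣ + 1)`. Let `G_k` be the same moments of `g = -f'`. Differentiating under the integral,
`F_k' = -G_k`, and integrating by parts in `r`, `(k + 1) F_k = 2 G_{k+2}`. Hence `β'` has the sign of
`3 F₂ G₄ - 5 G₂ F₄ = 2 (G₄² - G₂ G₆)`, which is negative by the Cauchy–Schwarz inequality, for every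
`c ∈ ℝ`.
-/

open Set Filter Metric Topology

noncomputable section

lemma setIntegral_pos_of_continuous {X : Type*} [TopologicalSpace X] [MeasurableSpace X]
    [OpensMeasurableSpace X] {μ : Measure X} [μ.IsOpenPosMeasure] {s : Set X} (hs : IsOpen s)
    {g : X → ℝ} (hg : Continuous g) (hint : IntegrableOn g s μ) (hnonneg : ∀ x ∈ s, 0 ≤ g x)
    {x₀ : X} (hx₀ : x₀ ∈ s) (hgx₀ : g x₀ ≠ 0) : 0 < ∫ x in s, g x ∂μ := by
  rw [setIntegral_pos_iff_support_of_nonneg_ae ((ae_restrict_iff' hs.measurableSet).2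
    (Eventually.of_forall hnonneg)) hint]
  exact (hg.isOpen_support.inter hs).measure_pos μ ⟨x₀, hgx₀, hx₀⟩

lemma strictAnti_div_rpow {u v u' v' : ℝ → ℝ} {a : ℝ} (hu : ∀ x, HasDerivAt u (u' x) x)
    (hv : ∀ x, HasDerivAt v (v' x) x) (hv_pos : ∀ x, 0 < v x)
    (h : ∀ x, u' x * v x < a * u x * v' x) : StrictAnti fun x => u x / v x ^ a := by
  refine strictAnti_of_hasDerivAt_neg (fun x => (hu x).div
    ((hv x).rpow_const (Or.inl (hv_pos x).ne')) (rpow_pos_of_pos (hv_pos x) a).ne') fun x => ?_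
  have hvx := hv_pos x
  have hpow : v x ^ (a - 1) = v x ^ a / v x := by rw [rpow_sub hvx, rpow_one]
  have hnum : u' x * v x ^ a - u x * (v' x * a * v x ^ (a - 1))
      = v x ^ a / v x * (u' x * v x - a * u x * v' x) := by
    rw [hpow]; field_simp
  have hx := h x
  have hpos : 0 < v x ^ a := rpow_pos_of_pos hvx a
  rw [hnum]
  exact div_neg_of_neg_of_pos (mul_neg_of_pos_of_neg (by positivity) (by linarith)) (by positivity)

def radialMoment (φ : ℝ → ℝ) (k : ℕ) (c : ℝ) : ℝ := ∫ r in Ioi 0, r ^ k * φ (r ^ 2 + c)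

lemma radialMoment_neg (φ : ℝ → ℝ) (k : ℕ) (c : ℝ) :
    radialMoment (fun x => -φ x) k c = -radialMoment φ k c := by
  simp only [radialMoment, mul_neg, integral_neg]

lemma integrableOn_pow_mul_exp_neg_sq_add (k : ℕ) (c : ℝ) :
    IntegrableOn (fun r : ℝ => r ^ k * exp (-(r ^ 2 + c))) (Ioi 0) := by
  refine (integrableOn_congr_fun (fun r (_ : r ∈ Ioi (0:ℝ)) => ?_) measurableSet_Ioi).1
    ((integrableOn_rpow_mul_exp_neg_mul_sq one_pos
      (by linarith [k.cast_nonneg (α := ℝ)] : (-1:ℝ) < k)).mul_const (exp (-c)))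
  simp only [rpow_natCast, mul_assoc, ← exp_add]
  ring_nf

lemma tendsto_pow_mul_exp_neg_sq_add (k : ℕ) (c : ℝ) :
    Tendsto (fun r : ℝ => r ^ k * exp (-(r ^ 2 + c))) atTop (𝓝 0) := by
  have h := ((tendsto_rpow_abs_mul_exp_neg_mul_sq_cocompact one_pos k).mono_left
    atTop_le_cocompact).mul_const (exp (-c))
  rw [zero_mul] at h
  refine h.congr' ?_
  filter_upwards [eventually_ge_atTop 0] with r hr
  rw [abs_of_nonneg hr, rpow_natCast, mul_assoc, ← exp_add]
  ring_nf

def ExpDominated (φ : ℝ → ℝ) : Prop := Continuous φ ∧ ∀ x, |φ x| ≤ exp (-x)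

namespace ExpDominated

variable {φ φ' : ℝ → ℝ}

lemma neg (hφ : ExpDominated φ) : ExpDominated fun x => -φ x :=
  ⟨hφ.1.neg, fun x => (abs_neg (φ x)).trans_le (hφ.2 x)⟩

lemma abs_pow_mul_le (hφ : ExpDominated φ) (k : ℕ) (c : ℝ) {r : ℝ} (hr : 0 ≤ r) :
    |r ^ k * φ (r ^ 2 + c)| ≤ r ^ k * exp (-(r ^ 2 + c)) := by
  rw [abs_mul, abs_of_nonneg (pow_nonneg hr k)]
  exact mul_le_mul_of_nonneg_left (hφ.2 _) (pow_nonneg hr k)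

lemma continuous_pow_mul (hφ : ExpDominated φ) (k : ℕ) (c : ℝ) :
    Continuous fun r : ℝ => r ^ k * φ (r ^ 2 + c) := by
  have := hφ.1; fun_prop

lemma integrableOn (hφ : ExpDominated φ) (k : ℕ) (c : ℝ) :
    IntegrableOn (fun r : ℝ => r ^ k * φ (r ^ 2 + c)) (Ioi 0) := by
  refine (integrableOn_pow_mul_exp_neg_sq_add k c).mono'
    (hφ.continuous_pow_mul k c).aestronglyMeasurable ?_
  filter_upwards [ae_restrict_mem measurableSet_Ioi] with r hr
  exact hφ.abs_pow_mul_le k c (le_of_lt hr)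

lemma tendsto (hφ : ExpDominated φ) (k : ℕ) (c : ℝ) :
    Tendsto (fun r : ℝ => r ^ k * φ (r ^ 2 + c)) atTop (𝓝 0) := by
  refine squeeze_zero_norm' ?_ (tendsto_pow_mul_exp_neg_sq_add k c)
  filter_upwards [eventually_ge_atTop 0] with r hr
  exact hφ.abs_pow_mul_le k c hr

lemma radialMoment_pos (hφ : ExpDominated φ) (hpos : ∀ x, 0 < φ x) (k : ℕ) (c : ℝ) :
    0 < radialMoment φ k c :=
  setIntegral_pos_of_continuous isOpen_Ioi (hφ.continuous_pow_mul k c) (hφ.integrableOn k c)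
    (fun r hr => mul_nonneg (pow_nonneg (le_of_lt hr) k) (hpos _).le) (mem_Ioi.2 one_pos)
    (by simp [(hpos _).ne'])

/-- Cauchy–Schwarz, from `0 < ∫ r ^ k (t - r ^ 2) ^ 2 φ (r ^ 2 + c)` at
`t = radialMoment φ (k + 2) c / radialMoment φ k c`. -/
lemma sq_radialMoment_lt (hφ : ExpDominated φ) (hpos : ∀ x, 0 < φ x) (k : ℕ) (c : ℝ) :
    radialMoment φ (k + 2) c ^ 2 < radialMoment φ k c * radialMoment φ (k + 4) c := by
  set A := radialMoment φ k c
  set B := radialMoment φ (k + 2) c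
  set C := radialMoment φ (k + 4) c
  have hA : 0 < A := hφ.radialMoment_pos hpos k c
  set t := B / A
  have hquad : 0 < t ^ 2 * A - 2 * t * B + C := by
    have hint₁ := (hφ.integrableOn k c).const_mul (t ^ 2)
    have hint₂ := (hφ.integrableOn (k + 2) c).const_mul (2 * t)
    have hint := (hint₁.sub hint₂).add (hφ.integrableOn (k + 4) c)
    have hsplit : t ^ 2 * A - 2 * t * B + C = ∫ r in Ioi 0,
        (t ^ 2 * (r ^ k * φ (r ^ 2 + c)) - 2 * t * (r ^ (k + 2) * φ (r ^ 2 + c))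
          + r ^ (k + 4) * φ (r ^ 2 + c)) := by
      rw [integral_add ?_ (hφ.integrableOn (k + 4) c), integral_sub hint₁ hint₂,
        integral_const_mul, integral_const_mul]
      exacts [rfl, hint₁.sub hint₂]
    have hsq (r : ℝ) : t ^ 2 * (r ^ k * φ (r ^ 2 + c)) - 2 * t * (r ^ (k + 2) * φ (r ^ 2 + c))
        + r ^ (k + 4) * φ (r ^ 2 + c) = r ^ k * (t - r ^ 2) ^ 2 * φ (r ^ 2 + c) := by ring
    rw [hsplit]
    refine setIntegral_pos_of_continuous isOpen_Ioi (by have := hφ.1; fun_prop) hint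
      (fun r hr => ?_) (x₀ := √|t| + 1) (mem_Ioi.2 (by positivity)) ?_
    · rw [hsq]
      exact mul_nonneg (mul_nonneg (pow_nonneg (le_of_lt hr) k) (sq_nonneg _)) (hpos _).le
    · rw [hsq]
      have : t < (√|t| + 1) ^ 2 := by
        nlinarith [sq_sqrt (abs_nonneg t), le_abs_self t, sqrt_nonneg |t|]
      exact mul_ne_zero (mul_ne_zero (by positivity) (by nlinarith)) (hpos _).ne'
  have hval : t ^ 2 * A - 2 * t * B + C = C - B ^ 2 / A := by
    simp only [t]; field_simp; ring
  rw [hval, sub_pos, div_lt_iff₀ hA] at hquad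
  linarith

lemma hasDerivAt_radialMoment (hφ : ExpDominated φ) (hφ' : ExpDominated φ')
    (hderiv : ∀ x, HasDerivAt φ (φ' x) x) (k : ℕ) (c : ℝ) :
    HasDerivAt (radialMoment φ k) (radialMoment φ' k c) c := by
  refine (hasDerivAt_integral_of_dominated_loc_of_deriv_le (F := fun x r => r ^ k * φ (r ^ 2 + x))
    (F' := fun x r => r ^ k * φ' (r ^ 2 + x)) (ball_mem_nhds c one_pos)
    (Eventually.of_forall fun x => (hφ.continuous_pow_mul k x).aestronglyMeasurable)
    (hφ.integrableOn k c) (hφ'.continuous_pow_mul k c).aestronglyMeasurable ?_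
    (integrableOn_pow_mul_exp_neg_sq_add k (c - 1)) ?_).2
  · filter_upwards [ae_restrict_mem measurableSet_Ioi] with r hr x hx
    have hxc : c - 1 ≤ x := by linarith [(abs_lt.1 (mem_ball.1 hx)).1]
    exact (hφ'.abs_pow_mul_le k x (le_of_lt hr)).trans
      (mul_le_mul_of_nonneg_left (exp_le_exp.2 (by linarith)) (pow_nonneg (le_of_lt hr) k))
  · refine Eventually.of_forall fun r x _ => ?_
    simpa using ((hderiv (r ^ 2 + x)).comp x ((hasDerivAt_id x).const_add (r ^ 2))).const_mul
      (r ^ k)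

/-- Integration by parts against `d/dr r ^ (k + 1) = (k + 1) r ^ k`; the boundary terms vanish. -/
lemma add_one_mul_radialMoment_eq (hφ : ExpDominated φ) (hφ' : ExpDominated φ')
    (hderiv : ∀ x, HasDerivAt φ (φ' x) x) (k : ℕ) (c : ℝ) :
    (k + 1) * radialMoment φ k c = -2 * radialMoment φ' (k + 2) c := by
  have hH : ∀ r ∈ Ici (0:ℝ), HasDerivAt (fun r => r ^ (k + 1) * φ (r ^ 2 + c))
      ((k + 1) * (r ^ k * φ (r ^ 2 + c)) + 2 * (r ^ (k + 2) * φ' (r ^ 2 + c))) r := by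
    intro r _
    have hsq : HasDerivAt (fun r : ℝ => r ^ 2 + c) (2 * r) r := by
      simpa using (hasDerivAt_pow 2 r).add_const c
    refine ((hasDerivAt_pow (k + 1) r).mul ((hderiv (r ^ 2 + c)).comp r hsq)).congr_deriv ?_
    simp only [Nat.add_sub_cancel, Function.comp_apply, Nat.cast_add, Nat.cast_one]
    ring
  have hint := ((hφ.integrableOn k c).const_mul (k + 1)).add
    ((hφ'.integrableOn (k + 2) c).const_mul 2)
  have hftc := integral_Ioi_of_hasDerivAt_of_tendsto' hH hint (hφ.tendsto (k + 1) c)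
  rw [integral_add ((hφ.integrableOn k c).const_mul _) ((hφ'.integrableOn (k + 2) c).const_mul _),
    integral_const_mul, integral_const_mul] at hftc
  rw [zero_pow k.succ_ne_zero, zero_mul, sub_zero] at hftc
  unfold radialMoment
  linarith

end ExpDominated

def fermi (x : ℝ) : ℝ := (exp x + 1)⁻¹

def fermiSlope (x : ℝ) : ℝ := exp x / (exp x + 1) ^ 2

lemma fermi_pos (x : ℝ) : 0 < fermi x := by unfold fermi; positivity

lemma fermiSlope_pos (x : ℝ) : 0 < fermiSlope x := by unfold fermiSlope; positivity

lemma hasDerivAt_fermi (x : ℝ) : HasDerivAt fermi (-fermiSlope x) x := by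
  refine (((hasDerivAt_exp x).add_const 1).inv (by positivity)).congr_deriv ?_
  rw [fermiSlope, neg_div]

lemma expDominated_fermi : ExpDominated fermi := by
  refine ⟨(continuous_exp.add continuous_const).inv₀ fun x => (add_pos (exp_pos x) one_pos).ne',
    fun x => ?_⟩
  rw [abs_of_pos (fermi_pos x), exp_neg]
  exact inv_anti₀ (exp_pos x) (by linarith)

lemma expDominated_fermiSlope : ExpDominated fermiSlope := by
  refine ⟨continuous_exp.div ((continuous_exp.add continuous_const).pow 2) fun x => by positivity,
    fun x => ?_⟩
  rw [abs_of_pos (fermiSlope_pos x), fermiSlope, exp_neg, div_le_iff₀ (by positivity),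
    inv_mul_eq_div, le_div_iff₀ (exp_pos x)]
  nlinarith [exp_pos x]

lemma hasDerivAt_radialMoment_fermi (k : ℕ) (c : ℝ) :
    HasDerivAt (radialMoment fermi k) (-radialMoment fermiSlope k c) c := by
  rw [← radialMoment_neg]
  exact expDominated_fermi.hasDerivAt_radialMoment expDominated_fermiSlope.neg hasDerivAt_fermi k c

lemma add_one_mul_radialMoment_fermi (k : ℕ) (c : ℝ) :
    (k + 1) * radialMoment fermi k c = 2 * radialMoment fermiSlope (k + 2) c := by
  rw [expDominated_fermi.add_one_mul_radialMoment_eq expDominated_fermiSlope.neg hasDerivAt_fermi,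
    radialMoment_neg]
  ring

lemma three_mul_radialMoment_fermi_lt (c : ℝ) :
    3 * (radialMoment fermi 2 c * radialMoment fermiSlope 4 c)
      < 5 * (radialMoment fermiSlope 2 c * radialMoment fermi 4 c) := by
  have h₂ := add_one_mul_radialMoment_fermi 2 c
  have h₄ := add_one_mul_radialMoment_fermi 4 c
  have hcs := expDominated_fermiSlope.sq_radialMoment_lt fermiSlope_pos 2 c
  norm_num at h₂ h₄ hcs
  calc 3 * (radialMoment fermi 2 c * radialMoment fermiSlope 4 c)
      = 2 * radialMoment fermiSlope 4 c ^ 2 := by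
        linear_combination radialMoment fermiSlope 4 c * h₂
    _ < 2 * (radialMoment fermiSlope 2 c * radialMoment fermiSlope 6 c) := by gcongr
    _ = 5 * (radialMoment fermiSlope 2 c * radialMoment fermi 4 c) := by
        linear_combination -radialMoment fermiSlope 2 c * h₄

/-- `4π`, the area of the unit sphere of `ℝ³`. -/
def sphereArea : ℝ := 3 * volume.real (ball (0 : EuclideanSpace ℝ (Fin 3)) 1)

lemma sphereArea_pos : 0 < sphereArea :=
  mul_pos three_pos (ENNReal.toReal_pos (measure_ball_pos _ _ one_pos).ne' measure_ball_lt_top.ne)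

lemma integral_fun_norm_eq_sphereArea_mul (f : ℝ → ℝ) :
    ∫ p : EuclideanSpace ℝ (Fin 3), f ‖p‖ = sphereArea * ∫ r in Ioi 0, r ^ 2 * f r := by
  rw [integral_fun_norm_addHaar, finrank_euclideanSpace_fin, sphereArea]
  simp only [nsmul_eq_mul, smul_eq_mul, Nat.cast_ofNat]
  ring

lemma betaFn_eq (c : ℝ) : betaFn c = sphereArea * radialMoment fermi 2 c /
    (sphereArea * radialMoment fermi 4 c) ^ ((3:ℝ) / 5) := by
  rw [betaFn, integral_fun_norm_eq_sphereArea_mul fun r => 1 / (exp (r ^ 2 + c) + 1),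
    integral_fun_norm_eq_sphereArea_mul fun r => r ^ 2 / (exp (r ^ 2 + c) + 1)]
  simp only [radialMoment, fermi]
  congr 4 <;> ext r <;> ring

theorem betaFn_strictAnti : StrictAnti betaFn := by
  have hκ : 0 < sphereArea := sphereArea_pos
  rw [show betaFn = _ from funext betaFn_eq]
  refine strictAnti_div_rpow (fun c => (hasDerivAt_radialMoment_fermi 2 c).const_mul sphereArea)
    (fun c => (hasDerivAt_radialMoment_fermi 4 c).const_mul sphereArea)
    (fun c => mul_pos hκ (expDominated_fermi.radialMoment_pos fermi_pos 4 c)) fun c => ?_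
  nlinarith [mul_lt_mul_of_pos_left (three_mul_radialMoment_fermi_lt c) (mul_pos hκ hκ)]

theorem stmt_10 : StrictAntiOn betaFn (Set.Ici (-Real.log 3)) :=
  betaFn_strictAnti.strictAntiOn _
end
end

section
/- Define β(c) = (∫_{ℝ³} 1/(e^{|p|²+c}+1) dp) / (∫_{ℝ³} |p|²/(e^{|p|²+c}+1) dp)^{3/5}. If 0 < B < β(−ln 3), then there exists a unique c ∈ (−ln 3, ∞) with β(c) = B. -/
open Real MeasureTheory

/-!
In polar coordinates both integrals become radial moments `m_k(c) = ∫₀^∞ x^k f(x² + c) dx` of the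
Fermi function `f(y) = 1 / (e^y + 1)`, so that `β = A m₂ / (A m₄)^(3/5)` with `A` the area of the
unit sphere. Differentiating under the integral sign gives `m_k' = μ_k`, the radial moments of
`f'`, and integrating by parts gives `(k + 1) m_k = -2 μ_{k+2}`. Hence `β'` has the sign of
`μ₄² - μ₂ μ₆`, which is negative by the strict Cauchy–Schwarz inequality. Comparing `f(y)` with
`e^{-y}` gives `β(c) = O(e^{-2c/5})`, and the intermediate value theorem provides the solution.
-/

open Set Filter Topology

lemma integral_pos_of_ae_pos {α : Type*} [MeasurableSpace α] {μ : Measure α} (hμ : μ ≠ 0)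
    {f : α → ℝ} (hf : Integrable f μ) (hpos : ∀ᵐ x ∂μ, 0 < f x) : 0 < ∫ x, f x ∂μ := by
  rw [integral_pos_iff_support_of_nonneg_ae (hpos.mono fun _ hx => hx.le) hf]
  refine (Measure.measure_univ_pos.2 hμ).trans_le (measure_mono_ae ?_)
  exact hpos.mono fun x hx _ => hx.ne'

lemma integrableOn_pow_mul_exp_neg_sq (k : ℕ) :
    IntegrableOn (fun x : ℝ => x ^ k * exp (-x ^ 2)) (Ioi 0) := by
  have h := integrableOn_rpow_mul_exp_neg_mul_sq one_pos
    (by exact_mod_cast neg_one_lt_zero.trans_le (Nat.cast_nonneg k) : (-1 : ℝ) < k)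
  refine h.congr_fun (fun x _ => ?_) measurableSet_Ioi
  simp [rpow_natCast]

lemma sq_integral_pow_four_mul_lt {w : ℝ → ℝ} (hw : ∀ x > 0, 0 < w x)
    (h2 : IntegrableOn (fun x => x ^ 2 * w x) (Ioi 0))
    (h4 : IntegrableOn (fun x => x ^ 4 * w x) (Ioi 0))
    (h6 : IntegrableOn (fun x => x ^ 6 * w x) (Ioi 0)) :
    (∫ x in Ioi 0, x ^ 4 * w x) ^ 2 <
      (∫ x in Ioi 0, x ^ 2 * w x) * ∫ x in Ioi 0, x ^ 6 * w x := by
  set a := ∫ x in Ioi 0, x ^ 2 * w x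
  set b := ∫ x in Ioi 0, x ^ 4 * w x
  set e := ∫ x in Ioi 0, x ^ 6 * w x
  have ha : 0 < a := by
    refine integral_pos_of_ae_pos (by simp) h2 ?_
    filter_upwards [ae_restrict_mem measurableSet_Ioi] with x (hx : 0 < x)
    exact mul_pos (by positivity) (hw x hx)
  set t := b / a
  -- the quadratic `∫ x² w (t - x²)²` in `t` is positive; take `t = b / a` at its minimum
  have hsub : IntegrableOn (fun x => t ^ 2 * (x ^ 2 * w x) - 2 * t * (x ^ 4 * w x)) (Ioi 0) :=
    (h2.const_mul _).sub (h4.const_mul _)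
  have hquad : 0 < ∫ x in Ioi 0, t ^ 2 * (x ^ 2 * w x) - 2 * t * (x ^ 4 * w x) + x ^ 6 * w x := by
    refine integral_pos_of_ae_pos (by simp) (hsub.add h6) ?_
    filter_upwards [ae_restrict_mem measurableSet_Ioi,
      ae_restrict_of_ae ((countable_singleton (√t)).ae_notMem volume)] with x (hx : 0 < x) hxt
    have hne : t - x ^ 2 ≠ 0 := fun h => hxt (by rw [mem_singleton_iff, sub_eq_zero.1 h,
      sqrt_sq hx.le])
    have hpos : 0 < x ^ 2 * w x * (t - x ^ 2) ^ 2 := by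
      have := hw x hx
      positivity
    linarith [show x ^ 2 * w x * (t - x ^ 2) ^ 2 =
      t ^ 2 * (x ^ 2 * w x) - 2 * t * (x ^ 4 * w x) + x ^ 6 * w x by ring]
  rw [integral_add hsub h6,
    integral_sub (h2.const_mul _) (h4.const_mul _), integral_const_mul, integral_const_mul] at hquad
  have : t ^ 2 * a - 2 * t * b + e = e - b ^ 2 / a := by
    simp only [t]
    field_simp
    ring
  rw [this, sub_pos, div_lt_iff₀ ha] at hquad
  linarith

lemma exists_hasDerivAt_div_rpow_neg {N D : ℝ → ℝ} {n d p x : ℝ} (hN : HasDerivAt N n x)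
    (hD : HasDerivAt D d x) (hD0 : 0 < D x) (h : n * D x < p * N x * d) :
    ∃ e < 0, HasDerivAt (fun y => N y / D y ^ p) e x := by
  have hDp : 0 < D x ^ p := rpow_pos_of_pos hD0 p
  refine ⟨_, ?_, hN.div (hD.rpow_const (Or.inl hD0.ne')) hDp.ne'⟩
  rw [rpow_sub_one hD0.ne']
  have : n * D x ^ p - N x * (d * p * (D x ^ p / D x)) =
      D x ^ p / D x * (n * D x - p * N x * d) := by
    field_simp
  rw [this]
  exact div_neg_of_neg_of_pos (mul_neg_of_pos_of_neg (by positivity) (by linarith)) (by positivity)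

noncomputable section

namespace FermiDirac

def radialMoment (φ : ℝ → ℝ) (k : ℕ) (c : ℝ) : ℝ :=
  ∫ x in Ioi 0, x ^ k * φ (x ^ 2 + c)

section RadialMoment

variable {φ φ' : ℝ → ℝ}

lemma abs_pow_mul_comp_le (hφ : ∀ y, |φ y| ≤ exp (-y)) (k : ℕ) (c : ℝ) {x : ℝ} (hx : 0 ≤ x) :
    |x ^ k * φ (x ^ 2 + c)| ≤ exp (-c) * (x ^ k * exp (-x ^ 2)) := by
  rw [abs_mul, abs_of_nonneg (pow_nonneg hx k)]
  calc x ^ k * |φ (x ^ 2 + c)| ≤ x ^ k * exp (-(x ^ 2 + c)) := by gcongr; exact hφ _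
    _ = exp (-c) * (x ^ k * exp (-x ^ 2)) := by rw [neg_add, exp_add]; ring

lemma integrableOn_pow_mul_comp (hφc : Continuous φ) (hφ : ∀ y, |φ y| ≤ exp (-y))
    (k : ℕ) (c : ℝ) : IntegrableOn (fun x => x ^ k * φ (x ^ 2 + c)) (Ioi 0) := by
  refine ((integrableOn_pow_mul_exp_neg_sq k).const_mul (exp (-c))).mono'
    (by fun_prop : Continuous fun x => x ^ k * φ (x ^ 2 + c)).aestronglyMeasurable ?_
  filter_upwards [ae_restrict_mem measurableSet_Ioi] with x hx
  exact abs_pow_mul_comp_le hφ k c (le_of_lt hx)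

lemma radialMoment_pos (hφc : Continuous φ) (hφ : ∀ y, |φ y| ≤ exp (-y))
    (hφ0 : ∀ y, 0 < φ y) (k : ℕ) (c : ℝ) : 0 < radialMoment φ k c := by
  refine integral_pos_of_ae_pos (by simp)
    (integrableOn_pow_mul_comp hφc hφ k c) ?_
  filter_upwards [ae_restrict_mem measurableSet_Ioi] with x (hx : 0 < x)
  exact mul_pos (pow_pos hx k) (hφ0 _)

lemma hasDerivAt_radialMoment (hφd : ∀ y, HasDerivAt φ (φ' y) y) (hφ'c : Continuous φ')
    (hφ : ∀ y, |φ y| ≤ exp (-y)) (hφ' : ∀ y, |φ' y| ≤ exp (-y)) (k : ℕ) (c₀ : ℝ) :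
    HasDerivAt (radialMoment φ k) (radialMoment φ' k c₀) c₀ := by
  have hφc : Continuous φ := continuous_iff_continuousAt.2 fun y => (hφd y).continuousAt
  refine (hasDerivAt_integral_of_dominated_loc_of_deriv_le
    (F' := fun c x => x ^ k * φ' (x ^ 2 + c)) (Metric.ball_mem_nhds c₀ one_pos)
    (Eventually.of_forall fun c => (integrableOn_pow_mul_comp hφc hφ k c).aestronglyMeasurable)
    (integrableOn_pow_mul_comp hφc hφ k c₀)
    (integrableOn_pow_mul_comp hφ'c hφ' k c₀).aestronglyMeasurable ?_
    ((integrableOn_pow_mul_exp_neg_sq k).const_mul (exp (1 - c₀))) ?_).2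
  · filter_upwards [ae_restrict_mem measurableSet_Ioi] with x (hx : 0 < x) c hc
    have hc : -c ≤ 1 - c₀ := by
      have := (abs_sub_lt_iff.1 (Metric.mem_ball.1 hc)).2
      linarith
    calc ‖x ^ k * φ' (x ^ 2 + c)‖ ≤ exp (-c) * (x ^ k * exp (-x ^ 2)) :=
          abs_pow_mul_comp_le hφ' k c hx.le
      _ ≤ exp (1 - c₀) * (x ^ k * exp (-x ^ 2)) := by gcongr
  · refine Eventually.of_forall fun x c _ => ?_
    simpa using ((hφd (x ^ 2 + c)).comp c ((hasDerivAt_id c).const_add (x ^ 2))).const_mul (x ^ k)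

lemma tendsto_pow_mul_comp_atTop (hφ : ∀ y, |φ y| ≤ exp (-y)) (k : ℕ) (c : ℝ) :
    Tendsto (fun x => x ^ k * φ (x ^ 2 + c)) atTop (𝓝 0) := by
  have hlim := (tendsto_pow_mul_exp_neg_atTop_nhds_zero k).const_mul (exp (-c))
  rw [mul_zero] at hlim
  refine squeeze_zero_norm' ?_ hlim
  filter_upwards [eventually_ge_atTop (1 : ℝ)] with x hx
  calc ‖x ^ k * φ (x ^ 2 + c)‖ ≤ exp (-c) * (x ^ k * exp (-x ^ 2)) :=
        abs_pow_mul_comp_le hφ k c (by linarith)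
    _ ≤ exp (-c) * (x ^ k * exp (-x)) := by gcongr; nlinarith

lemma radialMoment_integration_by_parts (hφd : ∀ y, HasDerivAt φ (φ' y) y)
    (hφ'c : Continuous φ') (hφ : ∀ y, |φ y| ≤ exp (-y)) (hφ' : ∀ y, |φ' y| ≤ exp (-y))
    (k : ℕ) (c : ℝ) : (k + 1 : ℝ) * radialMoment φ k c + 2 * radialMoment φ' (k + 2) c = 0 := by
  have hφc : Continuous φ := continuous_iff_continuousAt.2 fun y => (hφd y).continuousAt
  have hderiv : ∀ x ∈ Ici (0 : ℝ), HasDerivAt (fun x => x ^ (k + 1) * φ (x ^ 2 + c))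
      ((k + 1 : ℝ) * (x ^ k * φ (x ^ 2 + c)) + 2 * (x ^ (k + 2) * φ' (x ^ 2 + c))) x := by
    intro x _
    have hx := (hφd (x ^ 2 + c)).comp x ((hasDerivAt_pow 2 x).add_const c)
    refine ((hasDerivAt_pow (k + 1) x).mul hx).congr_deriv ?_
    simp only [Nat.add_sub_cancel, Function.comp_apply]
    push_cast
    ring
  have hint := ((integrableOn_pow_mul_comp hφc hφ k c).const_mul (k + 1 : ℝ)).add
    ((integrableOn_pow_mul_comp hφ'c hφ' (k + 2) c).const_mul 2)
  have hftc := integral_Ioi_of_hasDerivAt_of_tendsto' hderiv hint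
    (tendsto_pow_mul_comp_atTop hφ (k + 1) c)
  rw [integral_add ((integrableOn_pow_mul_comp hφc hφ k c).const_mul _)
    ((integrableOn_pow_mul_comp hφ'c hφ' (k + 2) c).const_mul _), integral_const_mul,
    integral_const_mul] at hftc
  simpa [radialMoment] using hftc

end RadialMoment

def fermi (y : ℝ) : ℝ := 1 / (exp y + 1)

def fermiDeriv (y : ℝ) : ℝ := -(exp y / (exp y + 1) ^ 2)

lemma hasDerivAt_fermi (y : ℝ) : HasDerivAt fermi (fermiDeriv y) y := by
  have h := ((hasDerivAt_exp y).add_const 1).inv (by positivity)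
  rw [show fermi = fun y => (exp y + 1)⁻¹ from funext fun y => one_div _]
  exact h.congr_deriv (neg_div _ _)

lemma continuous_fermi : Continuous fermi :=
  continuous_iff_continuousAt.2 fun y => (hasDerivAt_fermi y).continuousAt

lemma continuous_fermiDeriv : Continuous fermiDeriv := by
  have : ∀ y, exp y + 1 ≠ 0 := fun y => by positivity
  unfold fermiDeriv
  fun_prop (disch := simp [this])

lemma fermi_pos (y : ℝ) : 0 < fermi y := by
  unfold fermi
  positivity

lemma fermiDeriv_neg (y : ℝ) : fermiDeriv y < 0 := by
  unfold fermiDeriv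
  exact neg_neg_of_pos (by positivity)

lemma fermi_le_exp_neg (y : ℝ) : fermi y ≤ exp (-y) := by
  rw [fermi, exp_neg, one_div]
  exact inv_anti₀ (exp_pos y) (by linarith)

lemma abs_fermi_le (y : ℝ) : |fermi y| ≤ exp (-y) := by
  rw [abs_of_pos (fermi_pos y)]
  exact fermi_le_exp_neg y

lemma abs_fermiDeriv_le (y : ℝ) : |fermiDeriv y| ≤ exp (-y) := by
  rw [abs_of_neg (fermiDeriv_neg y), fermiDeriv, neg_neg, exp_neg,
    div_le_iff₀ (by positivity), inv_mul_eq_div, le_div_iff₀ (exp_pos y)]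
  nlinarith [exp_pos y]

lemma exp_neg_div_two_le_fermi {y : ℝ} (hy : 0 ≤ y) : exp (-y) / 2 ≤ fermi y := by
  rw [fermi, exp_neg, div_le_div_iff₀ (by norm_num) (by positivity), one_mul,
    inv_mul_le_iff₀ (exp_pos y)]
  linarith [one_le_exp hy]

lemma radialMoment_fermi_pos (k : ℕ) (c : ℝ) : 0 < radialMoment fermi k c :=
  radialMoment_pos continuous_fermi abs_fermi_le fermi_pos k c

lemma hasDerivAt_radialMoment_fermi (k : ℕ) (c : ℝ) :
    HasDerivAt (radialMoment fermi k) (radialMoment fermiDeriv k c) c :=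
  hasDerivAt_radialMoment hasDerivAt_fermi continuous_fermiDeriv abs_fermi_le abs_fermiDeriv_le k c

lemma radialMoment_fermi_integration_by_parts (k : ℕ) (c : ℝ) :
    (k + 1 : ℝ) * radialMoment fermi k c + 2 * radialMoment fermiDeriv (k + 2) c = 0 :=
  radialMoment_integration_by_parts hasDerivAt_fermi continuous_fermiDeriv abs_fermi_le
    abs_fermiDeriv_le k c

lemma sq_radialMoment_fermiDeriv_lt (c : ℝ) :
    radialMoment fermiDeriv 4 c ^ 2 <
      radialMoment fermiDeriv 2 c * radialMoment fermiDeriv 6 c := by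
  have hint (k : ℕ) : IntegrableOn (fun x => x ^ k * -fermiDeriv (x ^ 2 + c)) (Ioi 0) := by
    simp only [mul_neg]
    exact (integrableOn_pow_mul_comp continuous_fermiDeriv abs_fermiDeriv_le k c).neg
  have h := sq_integral_pow_four_mul_lt (w := fun x => -fermiDeriv (x ^ 2 + c))
    (fun x _ => neg_pos.2 (fermiDeriv_neg _)) (hint 2) (hint 4) (hint 6)
  simpa only [radialMoment, mul_neg, integral_neg, neg_sq, neg_mul, neg_neg] using h

def sphereArea : ℝ := 3 * volume.real (Metric.ball (0 : EuclideanSpace ℝ (Fin 3)) 1)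

lemma sphereArea_pos : 0 < sphereArea :=
  mul_pos three_pos <|
    ENNReal.toReal_pos (Metric.measure_ball_pos _ _ one_pos).ne' measure_ball_lt_top.ne

lemma integral_comp_norm_eq (g : ℝ → ℝ) :
    ∫ p : EuclideanSpace ℝ (Fin 3), g ‖p‖ = sphereArea * ∫ r in Ioi 0, r ^ 2 * g r := by
  simp [integral_fun_norm_addHaar, sphereArea, Measure.real, mul_assoc]

lemma betaFn_eq (c : ℝ) : betaFn c =
    sphereArea * radialMoment fermi 2 c / (sphereArea * radialMoment fermi 4 c) ^ (3 / 5 : ℝ) := by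
  have h2 := integral_comp_norm_eq fun r => 1 / (exp (r ^ 2 + c) + 1)
  have h4 := integral_comp_norm_eq fun r => r ^ 2 / (exp (r ^ 2 + c) + 1)
  rw [betaFn, h2, h4]
  congr 3
  refine setIntegral_congr_fun measurableSet_Ioi fun r _ => ?_
  simp only [fermi]
  ring

lemma betaFn_pos (c : ℝ) : 0 < betaFn c := by
  rw [betaFn_eq]
  have := sphereArea_pos
  have := radialMoment_fermi_pos 2 c
  have := radialMoment_fermi_pos 4 c
  positivity

lemma exists_hasDerivAt_betaFn_neg (c : ℝ) : ∃ e < 0, HasDerivAt betaFn e c := by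
  set A := sphereArea
  have hA : 0 < A := sphereArea_pos
  rw [show betaFn = fun c => A * radialMoment fermi 2 c /
    (A * radialMoment fermi 4 c) ^ (3 / 5 : ℝ) from funext betaFn_eq]
  refine exists_hasDerivAt_div_rpow_neg ((hasDerivAt_radialMoment_fermi 2 c).const_mul A)
    ((hasDerivAt_radialMoment_fermi 4 c).const_mul A)
    (mul_pos hA (radialMoment_fermi_pos 4 c)) ?_
  have h2 := radialMoment_fermi_integration_by_parts 2 c
  have h4 := radialMoment_fermi_integration_by_parts 4 c
  push_cast at h2 h4
  have hcs := sq_radialMoment_fermiDeriv_lt c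
  set m := radialMoment fermi
  set m' := radialMoment fermiDeriv
  have key : A * m' 2 c * (A * m 4 c) - 3 / 5 * (A * m 2 c) * (A * m' 4 c) =
      2 / 5 * A ^ 2 * (m' 4 c ^ 2 - m' 2 c * m' 6 c) := by
    linear_combination (A ^ 2 * m' 2 c / 5) * h4 - (A ^ 2 * m' 4 c / 5) * h2
  have := mul_neg_of_pos_of_neg (by positivity : (0 : ℝ) < 2 / 5 * A ^ 2) (sub_neg.2 hcs)
  linarith

lemma strictAnti_betaFn : StrictAnti betaFn :=
  strictAnti_of_deriv_neg fun c => by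
    obtain ⟨e, he, hd⟩ := exists_hasDerivAt_betaFn_neg c
    rwa [hd.deriv]

lemma continuous_betaFn : Continuous betaFn :=
  continuous_iff_continuousAt.2 fun c => by
    obtain ⟨e, -, hd⟩ := exists_hasDerivAt_betaFn_neg c
    exact hd.continuousAt

lemma integrableOn_pow_mul_exp_neg_comp (k : ℕ) (c : ℝ) :
    IntegrableOn (fun x => x ^ k * exp (-(x ^ 2 + c))) (Ioi 0) :=
  integrableOn_pow_mul_comp (by fun_prop) (fun y => (abs_of_pos (exp_pos _)).le) k c

lemma radialMoment_fermi_le (k : ℕ) (c : ℝ) :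
    radialMoment fermi k c ≤ exp (-c) * radialMoment (fun y => exp (-y)) k 0 := by
  rw [radialMoment, radialMoment, ← integral_const_mul]
  refine setIntegral_mono_on (integrableOn_pow_mul_comp continuous_fermi abs_fermi_le k c)
    ((integrableOn_pow_mul_exp_neg_comp k 0).const_mul _) measurableSet_Ioi fun x hx => ?_
  calc x ^ k * fermi (x ^ 2 + c) ≤ x ^ k * exp (-(x ^ 2 + c)) := by
        gcongr
        · exact pow_nonneg (le_of_lt hx) k
        · exact fermi_le_exp_neg _
    _ = exp (-c) * (x ^ k * exp (-(x ^ 2 + 0))) := by rw [add_zero, neg_add, exp_add]; ring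

lemma le_radialMoment_fermi (k : ℕ) {c : ℝ} (hc : 0 ≤ c) :
    exp (-c) / 2 * radialMoment (fun y => exp (-y)) k 0 ≤ radialMoment fermi k c := by
  rw [radialMoment, radialMoment, ← integral_const_mul]
  refine setIntegral_mono_on ((integrableOn_pow_mul_exp_neg_comp k 0).const_mul _)
    (integrableOn_pow_mul_comp continuous_fermi abs_fermi_le k c) measurableSet_Ioi fun x hx => ?_
  calc exp (-c) / 2 * (x ^ k * exp (-(x ^ 2 + 0)))
      = x ^ k * (exp (-(x ^ 2 + c)) / 2) := by rw [add_zero, neg_add, exp_add]; ring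
    _ ≤ x ^ k * fermi (x ^ 2 + c) := by
        gcongr
        · exact pow_nonneg (le_of_lt hx) k
        · exact exp_neg_div_two_le_fermi (by positivity)

lemma exists_betaFn_le : ∃ K, ∀ c ≥ 0, betaFn c ≤ K * exp (-(2 / 5 * c)) := by
  set A := sphereArea
  set G := radialMoment (fun y => exp (-y))
  have hA : 0 < A := sphereArea_pos
  have hG (k : ℕ) : 0 < G k 0 :=
    radialMoment_pos (by fun_prop) (fun y => (abs_of_pos (exp_pos _)).le) (fun y => exp_pos _) k 0
  have hG2 := hG 2
  have hG4 := hG 4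
  have hAG4 : 0 < A * G 4 0 / 2 := by positivity
  refine ⟨A * G 2 0 / (A * G 4 0 / 2) ^ (3 / 5 : ℝ), fun c hc => ?_⟩
  have hm4 := radialMoment_fermi_pos 4 c
  have hexp : exp (-c) = exp (-(2 / 5 * c)) * exp (-c * (3 / 5)) := by rw [← exp_add]; ring_nf
  calc betaFn c ≤ A * (exp (-c) * G 2 0) / (A * (exp (-c) / 2 * G 4 0)) ^ (3 / 5 : ℝ) := by
        rw [betaFn_eq]
        gcongr
        · exact radialMoment_fermi_le 2 c
        · exact le_radialMoment_fermi 4 hc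
    _ = A * G 2 0 / (A * G 4 0 / 2) ^ (3 / 5 : ℝ) * exp (-(2 / 5 * c)) := by
        rw [show A * (exp (-c) / 2 * G 4 0) = A * G 4 0 / 2 * exp (-c) by ring,
          mul_rpow hAG4.le (exp_pos _).le, ← exp_mul, hexp]
        have := rpow_pos_of_pos hAG4 (3 / 5)
        field_simp

lemma tendsto_betaFn_atTop : Tendsto betaFn atTop (𝓝 0) := by
  obtain ⟨K, hK⟩ := exists_betaFn_le
  have hlim := (tendsto_exp_neg_atTop_nhds_zero.comp
    (tendsto_id.const_mul_atTop (by norm_num : (0 : ℝ) < 2 / 5))).const_mul K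
  rw [mul_zero] at hlim
  exact squeeze_zero' (Eventually.of_forall fun c => (betaFn_pos c).le)
    ((eventually_ge_atTop 0).mono hK) hlim

end FermiDirac

end

theorem stmt_12 (B : ℝ) (hB0 : 0 < B) (hB1 : B < betaFn (-Real.log 3)) :
    ∃! c : ℝ, c ∈ Set.Ioi (-Real.log 3) ∧ betaFn c = B := by
  obtain ⟨c₁, hc₁, hc₁B⟩ := ((eventually_gt_atTop (-Real.log 3)).and
    (FermiDirac.tendsto_betaFn_atTop.eventually_lt_const hB0)).exists
  obtain ⟨c, hc, hcB⟩ :=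
    intermediate_value_Ioo' hc₁.le FermiDirac.continuous_betaFn.continuousOn ⟨hc₁B, hB1⟩
  exact ⟨c, ⟨hc.1, hcB⟩, fun y ⟨_, hyB⟩ =>
    FermiDirac.strictAnti_betaFn.injective (hyB.trans hcB.symm)⟩
end

section
/- Let a₀ > 0, c₀ ∈ ℝ, and m(p) = 1/(e^{a₀|p|²+c₀}+1) for p ∈ ℝ³. Then ∫_{ℝ³} |p|² (m − m²) dp = (3/(2a₀)) · ∫_{ℝ³} m dp. -/
/-! Write `m p = g ‖p‖` with `g r = 1 / (exp (a r² + c) + 1)`. Then `g' = -2 a r (g - g²)`, so the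
derivative of `r ^ d g` is `d r ^ (d - 1) g - 2 a r ^ (d + 1) (g - g²)`. Its integral over `(0, ∞)`
vanishes, because `r ^ d g` vanishes at `0` and, being integrable with integrable derivative, also
at `∞`. In polar coordinates on a `d`-dimensional space this is the claimed identity. -/

open Real MeasureTheory Set Filter Module

noncomputable def fermiDirac (a c r : ℝ) : ℝ := (exp (a * r ^ 2 + c) + 1)⁻¹

section FermiDirac

variable {a c : ℝ}

lemma fermiDirac_pos (a c r : ℝ) : 0 < fermiDirac a c r := by
  unfold fermiDirac
  positivity

lemma fermiDirac_le_one (a c r : ℝ) : fermiDirac a c r ≤ 1 :=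
  inv_le_one_of_one_le₀ (by linarith [exp_pos (a * r ^ 2 + c)])

lemma fermiDirac_sub_sq_nonneg (a c r : ℝ) : 0 ≤ fermiDirac a c r - fermiDirac a c r ^ 2 := by
  nlinarith [fermiDirac_pos a c r, fermiDirac_le_one a c r]

lemma fermiDirac_sub_sq_le (a c r : ℝ) :
    fermiDirac a c r - fermiDirac a c r ^ 2 ≤ fermiDirac a c r :=
  sub_le_self _ (sq_nonneg _)

lemma fermiDirac_le_exp (a c r : ℝ) : fermiDirac a c r ≤ exp (-c) * exp (-a * r ^ 2) := by
  rw [← exp_add, show -c + -a * r ^ 2 = -(a * r ^ 2 + c) by ring, exp_neg]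
  exact inv_anti₀ (exp_pos _) (le_add_of_nonneg_right zero_le_one)

@[fun_prop]
lemma continuous_fermiDirac : Continuous (fermiDirac a c) :=
  Continuous.inv₀ (by fun_prop) fun r => by positivity

lemma hasDerivAt_fermiDirac (a c r : ℝ) :
    HasDerivAt (fermiDirac a c) (-(2 * a * r) * (fermiDirac a c r - fermiDirac a c r ^ 2)) r := by
  have hexp : HasDerivAt (fun r => exp (a * r ^ 2 + c) + 1)
      (exp (a * r ^ 2 + c) * (2 * a * r)) r := by
    have hquad : HasDerivAt (fun r => a * r ^ 2 + c) (2 * a * r) r := by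
      simpa [mul_comm, mul_left_comm] using ((hasDerivAt_pow 2 r).const_mul a).add_const c
    exact hquad.exp.add_const 1
  show HasDerivAt (fun r => (exp (a * r ^ 2 + c) + 1)⁻¹) _ r
  refine (hexp.inv (by positivity)).congr_deriv ?_
  simp only [fermiDirac]
  field_simp
  ring

lemma integrableOn_pow_mul_fermiDirac (ha : 0 < a) (n : ℕ) :
    IntegrableOn (fun r => r ^ n * fermiDirac a c r) (Ioi 0) := by
  have hgauss := integrableOn_rpow_mul_exp_neg_mul_sq ha (s := n)
    (neg_one_lt_zero.trans_le n.cast_nonneg)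
  refine (hgauss.const_mul (exp (-c))).mono' (by fun_prop) ?_
  filter_upwards [ae_restrict_mem measurableSet_Ioi] with r (hr : 0 < r)
  rw [norm_of_nonneg (by positivity [fermiDirac_pos a c r]), rpow_natCast, mul_left_comm]
  exact mul_le_mul_of_nonneg_left (fermiDirac_le_exp a c r) (by positivity)

lemma integrableOn_pow_mul_fermiDirac_sub_sq (ha : 0 < a) (n : ℕ) :
    IntegrableOn (fun r => r ^ n * (fermiDirac a c r - fermiDirac a c r ^ 2)) (Ioi 0) := by
  refine (integrableOn_pow_mul_fermiDirac (c := c) ha n).mono' (by fun_prop) ?_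
  filter_upwards [ae_restrict_mem measurableSet_Ioi] with r (hr : 0 < r)
  rw [norm_of_nonneg (mul_nonneg (by positivity) (fermiDirac_sub_sq_nonneg a c r))]
  exact mul_le_mul_of_nonneg_left (fermiDirac_sub_sq_le a c r) (by positivity)

lemma integral_pow_mul_fermiDirac_sub_sq (ha : 0 < a) (n : ℕ) :
    ∫ r in Ioi 0, r ^ (n + 2) * (fermiDirac a c r - fermiDirac a c r ^ 2) =
      ((n + 1) / (2 * a)) * ∫ r in Ioi 0, r ^ n * fermiDirac a c r := by
  set F' : ℝ → ℝ := fun r => (n + 1) * (r ^ n * fermiDirac a c r) -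
    2 * a * (r ^ (n + 2) * (fermiDirac a c r - fermiDirac a c r ^ 2))
  have hderiv : ∀ r, HasDerivAt (fun r => r ^ (n + 1) * fermiDirac a c r) (F' r) r := by
    intro r
    refine ((hasDerivAt_pow (n + 1) r).mul (hasDerivAt_fermiDirac a c r)).congr_deriv ?_
    simp only [F']
    push_cast
    ring
  have hlow := (integrableOn_pow_mul_fermiDirac (c := c) ha n).const_mul (n + 1 : ℝ)
  have hhigh := (integrableOn_pow_mul_fermiDirac_sub_sq (c := c) ha (n + 2)).const_mul (2 * a)
  have hF'int : IntegrableOn F' (Ioi 0) := hlow.sub hhigh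
  have hlim := tendsto_zero_of_hasDerivAt_of_integrableOn_Ioi (fun r _ => hderiv r) hF'int
    (integrableOn_pow_mul_fermiDirac ha (n + 1))
  have hFTC := integral_Ioi_of_hasDerivAt_of_tendsto' (fun r _ => hderiv r) hF'int hlim
  rw [integral_sub hlow hhigh, integral_const_mul, integral_const_mul] at hFTC
  rw [zero_pow n.succ_ne_zero, zero_mul, sub_zero] at hFTC
  rw [div_mul_eq_mul_div, eq_div_iff (by positivity)]
  linarith

end FermiDirac

theorem integral_sq_norm_mul_fermiDirac_sub_sq {E : Type*} [NormedAddCommGroup E]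
    [NormedSpace ℝ E] [FiniteDimensional ℝ E] [Nontrivial E] [MeasurableSpace E] [BorelSpace E]
    (μ : Measure E) [μ.IsAddHaarMeasure] {a : ℝ} (ha : 0 < a) (c : ℝ) :
    ∫ x, ‖x‖ ^ 2 * (fermiDirac a c ‖x‖ - fermiDirac a c ‖x‖ ^ 2) ∂μ =
      (finrank ℝ E / (2 * a)) * ∫ x, fermiDirac a c ‖x‖ ∂μ := by
  obtain ⟨n, hn⟩ := Nat.exists_eq_add_one_of_ne_zero (finrank_pos (R := ℝ) (M := E)).ne'
  rw [integral_fun_norm_addHaar μ (fun r => r ^ 2 * (fermiDirac a c r - fermiDirac a c r ^ 2)),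
    integral_fun_norm_addHaar μ (fermiDirac a c)]
  simp only [hn, add_tsub_cancel_right, smul_eq_mul, ← mul_assoc, ← pow_add]
  rw [integral_pow_mul_fermiDirac_sub_sq ha n]
  push_cast
  ring

theorem stmt_17 (a₀ : ℝ) (ha : 0 < a₀) (c₀ : ℝ)
    (m : EuclideanSpace ℝ (Fin 3) → ℝ)
    (hm : ∀ p, m p = 1 / (exp (a₀ * ‖p‖ ^ 2 + c₀) + 1)) :
    ∫ p : EuclideanSpace ℝ (Fin 3), ‖p‖ ^ 2 * (m p - m p ^ 2) =
      (3 / (2 * a₀)) * ∫ p : EuclideanSpace ℝ (Fin 3), m p := by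
  have hm' : m = fun p => fermiDirac a₀ c₀ ‖p‖ := funext fun p => (hm p).trans (one_div _)
  subst hm'
  simpa using
    integral_sq_norm_mul_fermiDirac_sub_sq (volume : Measure (EuclideanSpace ℝ (Fin 3))) ha c₀
end
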